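/- arXiv:2004.07809 — 3 statements merged into one kernel-verified Lean document; each statement's English description precedes it below -/
import Mathlib

section
/- Let h(y) = -y·log₂(y) - (1-y)·log₂(1-y) be the binary entropy. If g : [x₀, x₁] → ℝ (with x₀, x₁ > 0) is convex and satisfies 0 ≤ g(x)/x ≤ 1/2 for all x in [x₀, x₁], then the function f(x) = x · h(1/2 - g(x)/x) is concave on [x₀, x₁]. -/
/-- Binary entropy with base-2 logarithm. -/
noncomputable def binEnt (y : ℝ) : ℝ :=
  -y * Real.logb 2 y - (1 - y) * Real.logb 2 (1 - y)

/-!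
With `q x = x / 2 - g x`, which is concave, the function is `x ↦ x * h (q x / x)`, and `h` is
concave and nondecreasing on `[0, 1/2]`. For `z = a x + b y`, Jensen's inequality for `h` with
the weights `a x / z` and `b y / z` gives
`a x h (q x / x) + b y h (q y / y) ≤ z h ((a q x + b q y) / z)`,
and `a q x + b q y ≤ q z` together with the monotonicity of `h` bounds this by `z h (q z / z)`.
-/

open Set

theorem ConcaveOn.mul_comp_div {s I : Set ℝ} {φ q : ℝ → ℝ} (hφ : ConcaveOn ℝ I φ)
    (hφm : MonotoneOn φ I) (hq : ConcaveOn ℝ s q) (hs : ∀ x ∈ s, 0 < x)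
    (hqI : ∀ x ∈ s, q x / x ∈ I) :
    ConcaveOn ℝ s (fun x => x * φ (q x / x)) := by
  refine ⟨hq.1, fun x hx y hy a b ha hb hab => ?_⟩
  simp only [smul_eq_mul]
  have hx0 := hs x hx
  have hy0 := hs y hy
  set z := a * x + b * y
  have hz : z ∈ s := hq.1 hx hy ha hb hab
  have hz0 := hs z hz
  have hw : a * x / z + b * y / z = 1 := by rw [← add_div, div_self hz0.ne']
  have hmean : (a * x / z) • (q x / x) + (b * y / z) • (q y / y) = (a * q x + b * q y) / z := by
    simp only [smul_eq_mul]
    field_simp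
  have hmem : (a * q x + b * q y) / z ∈ I :=
    hmean ▸ hφ.1 (hqI x hx) (hqI y hy) (by positivity) (by positivity) hw
  have hjensen := hφ.2 (hqI x hx) (hqI y hy) (by positivity) (by positivity) hw
  rw [hmean] at hjensen
  simp only [smul_eq_mul] at hjensen
  have hmono : φ ((a * q x + b * q y) / z) ≤ φ (q z / z) := by
    have hqz : a * q x + b * q y ≤ q z := by simpa using hq.2 hx hy ha hb hab
    exact hφm hmem (hqI z hz) (div_le_div_of_nonneg_right hqz hz0.le)
  calc a * (x * φ (q x / x)) + b * (y * φ (q y / y))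
      = z * (a * x / z * φ (q x / x) + b * y / z * φ (q y / y)) := by field_simp
    _ ≤ z * φ (q z / z) := mul_le_mul_of_nonneg_left (hjensen.trans hmono) hz0.le

theorem binEnt_eq_inv_log_two_mul (y : ℝ) : binEnt y = (Real.log 2)⁻¹ * Real.binEntropy y := by
  unfold binEnt Real.binEntropy Real.logb
  rw [Real.log_inv, Real.log_inv]
  field_simp
  ring

theorem concaveOn_binEnt : ConcaveOn ℝ (Icc 0 2⁻¹) binEnt := by
  have h := (Real.strictConcave_binEntropy.concaveOn.subset
    (Icc_subset_Icc_right (by norm_num)) (convex_Icc 0 2⁻¹)).smul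
    (inv_nonneg.2 (Real.log_nonneg one_le_two))
  exact h.congr fun y _ => (binEnt_eq_inv_log_two_mul y).symm

theorem monotoneOn_binEnt : MonotoneOn binEnt (Icc 0 2⁻¹) := fun a ha b hb hab => by
  simp only [binEnt_eq_inv_log_two_mul]
  exact mul_le_mul_of_nonneg_left (Real.binEntropy_strictMonoOn.monotoneOn ha hb hab)
    (inv_nonneg.2 (Real.log_nonneg one_le_two))

theorem stmt0_general (x₀ x₁ : ℝ) (hx₀ : 0 < x₀) (g : ℝ → ℝ)
    (hg : ConvexOn ℝ (Set.Icc x₀ x₁) g)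
    (hgl : ∀ x ∈ Set.Icc x₀ x₁, 0 ≤ g x / x)
    (hgu : ∀ x ∈ Set.Icc x₀ x₁, g x / x ≤ 1 / 2) :
    ConcaveOn ℝ (Set.Icc x₀ x₁) (fun x => x * binEnt (1 / 2 - g x / x)) := by
  have hpos : ∀ x ∈ Icc x₀ x₁, 0 < x := fun x hx => hx₀.trans_le hx.1
  have hq : ConcaveOn ℝ (Icc x₀ x₁) (fun x => x / 2 - g x) :=
    (((concaveOn_id (convex_Icc x₀ x₁)).smul (by norm_num : (0 : ℝ) ≤ 1 / 2)).sub hg).congr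
      fun x _ => by simp only [Pi.sub_apply, id, smul_eq_mul]; ring
  have hrewrite : ∀ x ∈ Icc x₀ x₁, (x / 2 - g x) / x = 1 / 2 - g x / x := fun x hx => by
    field_simp [(hpos x hx).ne']
  refine (concaveOn_binEnt.mul_comp_div monotoneOn_binEnt hq hpos fun x hx => ?_).congr
    fun x hx => by simp only [hrewrite x hx]
  rw [hrewrite x hx]
  constructor <;> linarith [hgl x hx, hgu x hx]

theorem stmt0 (x₀ x₁ : ℝ) (hx₀ : 0 < x₀) (hx₁ : 0 < x₁) (g : ℝ → ℝ)
    (hg : ConvexOn ℝ (Set.Icc x₀ x₁) g)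
    (hgl : ∀ x ∈ Set.Icc x₀ x₁, 0 ≤ g x / x)
    (hgu : ∀ x ∈ Set.Icc x₀ x₁, g x / x ≤ 1 / 2) :
    ConcaveOn ℝ (Set.Icc x₀ x₁) (fun x => x * binEnt (1 / 2 - g x / x)) :=
  stmt0_general x₀ x₁ hx₀ g hg hgl hgu
end

section
/- Define F(x,y) = 2y·log₂(2^x - 1) + 2h(y) - x + 2 and let f(x) denote the unique root of F(x,·) = 0 in (0, 1/2] for x ≥ 3. Then f is a non-decreasing function of x on [3, ∞). -/
/-- The function `F(x,y) = 2y·log₂(2^x - 1) + 2h(y) - x + 2`. -/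
noncomputable def Ffun (x y : ℝ) : ℝ :=
  2 * y * Real.logb 2 ((2 : ℝ) ^ x - 1) + 2 * binEnt y - x + 2

/-!
For `x ≥ 1`, `F(x, ·)` is strictly increasing on `[0, 1/2]` (as the entropy is), and
`∂F/∂x = 2y·2^x/(2^x - 1) - 1` is negative as long as `2y < 1 - 2^(-x)`. The root `f x` lies in
that region, since `F(x, (1 - 2^(-x))/2) ≥ 1 - (x - 1)·2^(-x) > 0` by `log₂(2^x - 1) ≥ x - 1` and
Bernoulli's inequality. Hence for `x < y`, `F(y, f x) < F(x, f x) = 0 = F(y, f y)`, so `f x < f y`.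
-/

open Real Set

lemma binEnt_eq_binEntropy_div_log_two (y : ℝ) : binEnt y = binEntropy y / log 2 := by
  simp only [binEnt, binEntropy, logb, log_inv]
  ring

lemma Ffun_strictMonoOn_Icc_zero_two_inv {x : ℝ} (hx : 1 ≤ x) :
    StrictMonoOn (Ffun x) (Icc 0 2⁻¹) := by
  have hslope : 0 ≤ logb 2 ((2 : ℝ) ^ x - 1) := by
    have : (2 : ℝ) ≤ 2 ^ x := by
      simpa using rpow_le_rpow_of_exponent_le one_le_two hx
    exact logb_nonneg one_lt_two (by linarith)
  intro a _ b _ hab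
  have hent := binEntropy_strictMonoOn ‹a ∈ _› ‹b ∈ _› hab
  simp only [Ffun, binEnt_eq_binEntropy_div_log_two]
  have := div_lt_div_of_pos_right hent (log_pos one_lt_two)
  nlinarith

lemma hasDerivAt_logb_two_rpow_sub_one {t : ℝ} (ht : 0 < t) :
    HasDerivAt (fun t : ℝ => logb 2 ((2 : ℝ) ^ t - 1)) (2 ^ t / (2 ^ t - 1)) t := by
  have hpos : (0 : ℝ) < 2 ^ t - 1 := by
    have := one_lt_rpow one_lt_two ht
    linarith
  have := (((hasStrictDerivAt_const_rpow two_pos t).hasDerivAt.sub_const 1).log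
    hpos.ne').div_const (log 2)
  refine this.congr_deriv ?_
  field_simp [(log_pos one_lt_two).ne']

lemma hasDerivAt_Ffun_left (a : ℝ) {t : ℝ} (ht : 0 < t) :
    HasDerivAt (fun t => Ffun t a) (2 * a * (2 ^ t / (2 ^ t - 1)) - 1) t :=
  ((((hasDerivAt_logb_two_rpow_sub_one ht).const_mul (2 * a)).add_const (2 * binEnt a)).sub
    (hasDerivAt_id t)).add_const 2

lemma Ffun_left_strictAntiOn_Ici {a x : ℝ} (hx : 0 < x) (ha : 2 * a < 1 - 2 ^ (-x)) :
    StrictAntiOn (fun t => Ffun t a) (Ici x) := by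
  have hderiv (t : ℝ) (ht : t ∈ Ici x) :=
    hasDerivAt_Ffun_left a (hx.trans_le ht)
  refine strictAntiOn_of_hasDerivWithinAt_neg (convex_Ici x)
    (fun t ht => (hderiv t ht).continuousAt.continuousWithinAt)
    (fun t ht => (hderiv t (interior_subset ht)).hasDerivWithinAt) fun t ht => ?_
  rw [interior_Ici] at ht
  have hs : 1 < (2 : ℝ) ^ t := one_lt_rpow one_lt_two (hx.trans ht)
  have hdecay : (2 : ℝ) ^ (-t) ≤ 2 ^ (-x) :=
    rpow_le_rpow_of_exponent_le one_le_two (neg_le_neg (le_of_lt ht))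
  have hinv : (2 : ℝ) ^ (-t) * 2 ^ t = 1 := by
    rw [rpow_neg zero_le_two, inv_mul_cancel₀ (by positivity)]
  rw [sub_neg, mul_div_assoc', div_lt_one (by linarith)]
  nlinarith

lemma sub_one_le_logb_two_rpow_sub_one {x : ℝ} (hx : 1 ≤ x) :
    x - 1 ≤ logb 2 ((2 : ℝ) ^ x - 1) := by
  have hhalf : (2 : ℝ) ^ x = 2 * 2 ^ (x - 1) := by
    rw [← rpow_one_add' zero_le_two (by linarith), add_sub_cancel]
  have hone : (1 : ℝ) ≤ 2 ^ (x - 1) := one_le_rpow one_le_two (by linarith)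
  calc x - 1 = logb 2 ((2 : ℝ) ^ (x - 1)) := (logb_rpow two_pos one_lt_two.ne').symm
    _ ≤ logb 2 ((2 : ℝ) ^ x - 1) := logb_le_logb_of_le one_lt_two (by positivity) (by linarith)

lemma Ffun_one_sub_two_rpow_neg_div_two_pos {x : ℝ} (hx : 1 ≤ x) :
    0 < Ffun x ((1 - 2 ^ (-x)) / 2) := by
  have hinv : (2 : ℝ) ^ (-x) * 2 ^ x = 1 := by
    rw [rpow_neg zero_le_two, inv_mul_cancel₀ (by positivity)]
  set t : ℝ := 2 ^ (-x)
  have ht : 0 < t := by positivity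
  have hbernoulli : 1 + x ≤ (2 : ℝ) ^ x := by
    simpa [one_add_one_eq_two] using one_add_mul_self_le_rpow_one_add (s := 1) (by norm_num) hx
  have ht_le : t ≤ 1 := rpow_le_one_of_one_le_of_nonpos one_le_two (by linarith)
  have hent : 0 ≤ binEnt ((1 - t) / 2) := by
    rw [binEnt_eq_binEntropy_div_log_two]
    exact div_nonneg (binEntropy_nonneg (by linarith) (by linarith)) (log_pos one_lt_two).le
  have hlog := sub_one_le_logb_two_rpow_sub_one hx
  have : (1 - t) * (x - 1) ≤ (1 - t) * logb 2 (2 ^ x - 1) :=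
    mul_le_mul_of_nonneg_left hlog (by linarith)
  simp only [Ffun]
  nlinarith

theorem stmt3_general (f : ℝ → ℝ)
    (hroot : ∀ x, 3 ≤ x → f x ∈ Set.Ioc (0 : ℝ) (1 / 2) ∧ Ffun x (f x) = 0) :
    ∀ x y : ℝ, 3 ≤ x → x ≤ y → f x ≤ f y := by
  intro x y hx hxy
  rcases hxy.eq_or_lt with rfl | hlt
  · rfl
  obtain ⟨hfx, hFx⟩ := hroot x hx
  obtain ⟨hfy, hFy⟩ := hroot y (hx.trans hxy)
  have hx₀ : (0 : ℝ) < 2 ^ (-x) := by positivity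
  have hx₁ : (2 : ℝ) ^ (-x) ≤ 1 := rpow_le_one_of_one_le_of_nonpos one_le_two (by linarith)
  have hIoc : Ioc (0 : ℝ) (1 / 2) ⊆ Icc 0 2⁻¹ := fun a ha => ⟨ha.1.le, by linarith [ha.2]⟩
  have below_crit : f x < (1 - 2 ^ (-x)) / 2 := by
    refine ((Ffun_strictMonoOn_Icc_zero_two_inv (x := x) (by linarith)).lt_iff_lt (hIoc hfx)
      ⟨by linarith, by linarith⟩).1 ?_
    rw [hFx]
    exact Ffun_one_sub_two_rpow_neg_div_two_pos (by linarith)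
  have : Ffun y (f x) < Ffun y (f y) := by
    rw [hFy, ← hFx]
    exact Ffun_left_strictAntiOn_Ici (by linarith) (by linarith) self_mem_Ici (mem_Ici.2 hlt.le)
      hlt
  exact (((Ffun_strictMonoOn_Icc_zero_two_inv (x := y) (by linarith)).lt_iff_lt (hIoc hfx)
    (hIoc hfy)).1 this).le

theorem stmt3 (f : ℝ → ℝ)
    (hroot : ∀ x, 3 ≤ x → f x ∈ Set.Ioc (0 : ℝ) (1 / 2) ∧ Ffun x (f x) = 0)
    (huniq : ∀ x, 3 ≤ x → ∀ y ∈ Set.Ioc (0 : ℝ) (1 / 2), Ffun x y = 0 → y = f x) :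
    ∀ x y : ℝ, 3 ≤ x → x ≤ y → f x ≤ f y :=
  stmt3_general f hroot
end

section
/- Let ρ_XB = (1/2)(|+⟩⟨+| ⊗ ρ⁺ + |−⟩⟨−| ⊗ ρ⁻) be a classical-quantum state on ℂ²⊗ℂ², where ρ⁺ = (p/2)·[[1+δ_z, δ_x],[δ_x, 1-δ_z]] in the z-basis and ρ⁻ = Z ρ⁺ Z with Z the phase flip swapping |+⟩ and |−⟩ (acting as [[1,0],[0,-1]] in the z basis up to basis relabeling), with δ_x² + δ_z² ≤ 1 and p = 1. Then the conditional entropy satisfies H(X|B)_{ρ_XB} = h((1 - √(δ_x² + δ_z²))/2) + 1 - h((1 - δ_z)/2), where h is the binary entropy. In particular H(X|B) ≤ h((1-δ_x)/2). -/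
open scoped ComplexOrder
open Matrix Kronecker

/-- Von Neumann entropy (base-2) of a Hermitian matrix, via its eigenvalues. -/
noncomputable def vNEnt {n : Type*} [Fintype n] [DecidableEq n] (A : Matrix n n ℂ) : ℝ :=
  open scoped Classical in
  if h : A.IsHermitian then
    -∑ i, h.eigenvalues i * Real.logb 2 (h.eigenvalues i)
  else 0

/-!
Since `Z ρ⁺ Z` is `ρ⁺` with `δx` negated, `ρ_B = diag((1 + δz)/2, (1 - δz)/2)`, while `ρ_XB`
has characteristic polynomial `((x - 1/4)^2 - r^2/16)^2` with `r = √(δx^2 + δz^2)`: its spectrum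
is `(1 ± r)/4`, each twice, i.e. a fair bit times the spectrum `(1 ± r)/2`. This gives the
formula for `H(X|B)`.

For the bound write `h((1 - t)/2) = 1 - φ(t) / (2 ln 2)` with
`φ(t) = (1 + t) ln(1 + t) + (1 - t) ln(1 - t) = ∑ 2 t^(2m+2) / ((2m+1)(2m+2))`. A power series in
`t^2` with nonnegative coefficients is superadditive in `t^2`, so `φ(δx) + φ(δz) ≤ φ(r)`: for
`r < 1` termwise, and for `r = 1` by continuity.
-/

open Polynomial Real Filter Topology

noncomputable def binEntDeficit (t : ℝ) : ℝ :=
  (1 + t) * log (1 + t) + (1 - t) * log (1 - t)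

lemma continuous_binEntDeficit : Continuous binEntDeficit :=
  (continuous_mul_log.comp (continuous_const.add continuous_id)).add
    (continuous_mul_log.comp (continuous_const.sub continuous_id))

lemma hasSum_binEntDeficit {t : ℝ} (ht : |t| < 1) :
    HasSum (fun m : ℕ => 2 * t ^ (2 * m + 2) / ((2 * m + 1) * (2 * m + 2)))
      (binEntDeficit t) := by
  have ht2 : |t ^ 2| < 1 := by rw [abs_pow]; exact pow_lt_one₀ (abs_nonneg t) ht two_ne_zero
  have hsum := ((hasSum_log_sub_log_of_abs_lt_one ht).mul_left t).sub
    (hasSum_pow_div_log_of_abs_lt_one ht2)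
  obtain ⟨ht₁, ht₂⟩ := abs_lt.mp ht
  have hvalue : t * (log (1 + t) - log (1 - t)) - -log (1 - t ^ 2) = binEntDeficit t := by
    rw [show 1 - t ^ 2 = (1 + t) * (1 - t) by ring, log_mul (by linarith) (by linarith),
      binEntDeficit]
    ring
  have hterm : ∀ m : ℕ, t * (2 * (1 / (2 * m + 1)) * t ^ (2 * m + 1)) - (t ^ 2) ^ (m + 1) / (m + 1)
      = 2 * t ^ (2 * m + 2) / ((2 * m + 1) * (2 * m + 2)) := fun m => by
    field_simp
    ring
  rwa [hvalue, funext hterm] at hsum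

lemma binEntDeficit_add_le_of_sq_add_sq_lt_one {a b : ℝ} (h : a ^ 2 + b ^ 2 < 1) :
    binEntDeficit a + binEntDeficit b ≤ binEntDeficit √(a ^ 2 + b ^ 2) := by
  have hr : √(a ^ 2 + b ^ 2) ^ 2 = a ^ 2 + b ^ 2 := sq_sqrt (by positivity)
  have habs : ∀ {t : ℝ}, t ^ 2 < 1 → |t| < 1 := fun ht => (sq_lt_one_iff_abs_lt_one _).mp ht
  refine hasSum_le (fun m => ?_) ((hasSum_binEntDeficit (habs (by nlinarith))).add
    (hasSum_binEntDeficit (habs (by nlinarith)))) (hasSum_binEntDeficit (habs (by linarith)))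
  have hpow : a ^ (2 * m + 2) + b ^ (2 * m + 2) ≤ √(a ^ 2 + b ^ 2) ^ (2 * m + 2) := by
    calc a ^ (2 * m + 2) + b ^ (2 * m + 2) = (a ^ 2) ^ (m + 1) + (b ^ 2) ^ (m + 1) := by ring
      _ ≤ (a ^ 2 + b ^ 2) ^ (m + 1) := pow_add_pow_le (sq_nonneg a) (sq_nonneg b) m.succ_ne_zero
      _ = (√(a ^ 2 + b ^ 2) ^ 2) ^ (m + 1) := by rw [hr]
      _ = √(a ^ 2 + b ^ 2) ^ (2 * m + 2) := by ring
  rw [← add_div, ← mul_add]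
  gcongr

lemma binEntDeficit_add_le {a b : ℝ} (h : a ^ 2 + b ^ 2 ≤ 1) :
    binEntDeficit a + binEntDeficit b ≤ binEntDeficit √(a ^ 2 + b ^ 2) := by
  have hscaled : ∀ s ∈ Set.Ioo (0 : ℝ) 1, binEntDeficit (s * a) + binEntDeficit (s * b) ≤
      binEntDeficit (s * √(a ^ 2 + b ^ 2)) := by
    rintro s ⟨hs₀, hs₁⟩
    have hsq : (s * a) ^ 2 + (s * b) ^ 2 = s ^ 2 * (a ^ 2 + b ^ 2) := by ring
    have hlt : (s * a) ^ 2 + (s * b) ^ 2 < 1 := by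
      rw [hsq]; nlinarith [mul_le_mul_of_nonneg_left h (sq_nonneg s)]
    have hsqrt : √(s ^ 2 * (a ^ 2 + b ^ 2)) = s * √(a ^ 2 + b ^ 2) := by
      rw [sqrt_mul (sq_nonneg s), sqrt_sq hs₀.le]
    simpa only [hsq, hsqrt] using binEntDeficit_add_le_of_sq_add_sq_lt_one hlt
  have hlim : ∀ c : ℝ, Tendsto (fun s => binEntDeficit (s * c)) (𝓝[<] 1) (𝓝 (binEntDeficit c)) :=
    fun c => ((continuous_binEntDeficit.comp (continuous_mul_const c)).tendsto' 1 _
      (by simp)).mono_left nhdsWithin_le_nhds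
  refine le_of_tendsto_of_tendsto ((hlim a).add (hlim b)) (hlim _) ?_
  filter_upwards [Ioo_mem_nhdsLT zero_lt_one] using hscaled

lemma mul_logb_div_two (y : ℝ) : y * logb 2 (y / 2) = y * logb 2 y - y := by
  rcases eq_or_ne y 0 with rfl | hy
  · simp
  · rw [logb_div hy two_ne_zero, logb_self_eq_one one_lt_two]
    ring

lemma binEnt_one_sub_div_two (t : ℝ) :
    binEnt ((1 - t) / 2) = 1 - binEntDeficit t / (2 * log 2) := by
  have hdeficit : binEntDeficit t / (2 * log 2) =
      ((1 + t) * logb 2 (1 + t) + (1 - t) * logb 2 (1 - t)) / 2 := by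
    simp only [binEntDeficit, logb]
    ring
  rw [binEnt, show 1 - (1 - t) / 2 = (1 + t) / 2 by ring, hdeficit]
  linear_combination (-1 / 2) * (mul_logb_div_two (1 + t) + mul_logb_div_two (1 - t))

lemma binEnt_sqrt_add_one_sub_binEnt_le {δx δz : ℝ} (h : δx ^ 2 + δz ^ 2 ≤ 1) :
    binEnt ((1 - √(δx ^ 2 + δz ^ 2)) / 2) + 1 - binEnt ((1 - δz) / 2) ≤ binEnt ((1 - δx) / 2) := by
  simp only [binEnt_one_sub_div_two]
  have hdiv := div_le_div_of_nonneg_right (binEntDeficit_add_le h)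
    (mul_pos two_pos (log_pos one_lt_two)).le
  rw [add_div] at hdiv
  linarith

lemma vNEnt_eq_of_charpoly_eq {n : Type*} [Fintype n] [DecidableEq n] {A : Matrix n n ℂ}
    (hA : A.IsHermitian) {μ : n → ℝ} (h : A.charpoly = ∏ i, (X - C (μ i : ℂ))) :
    vNEnt A = -∑ i, μ i * logb 2 (μ i) := by
  have hspec : Finset.univ.val.map hA.eigenvalues = Finset.univ.val.map μ := by
    have hroots := hA.roots_charpoly_eq_eigenvalues
    rw [h, roots_prod _ _ (Finset.prod_ne_zero_iff.mpr fun i _ => X_sub_C_ne_zero _)] at hroots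
    simp only [roots_X_sub_C, Multiset.bind_singleton] at hroots
    apply Multiset.map_injective Complex.ofReal_injective
    rw [Multiset.map_map, Multiset.map_map]
    exact hroots.symm
  rw [vNEnt, dif_pos hA]
  simpa only [Multiset.map_map, Function.comp_def, Finset.sum_eq_multiset_sum] using
    congrArg (fun s => -(s.map fun x => x * logb 2 x).sum) hspec

lemma vNEnt_diagonal {n : Type*} [Fintype n] [DecidableEq n] (d : n → ℝ) :
    vNEnt (diagonal fun i => (d i : ℂ)) = -∑ i, d i * logb 2 (d i) :=
  vNEnt_eq_of_charpoly_eq (isHermitian_diagonal_iff.mpr fun i => Complex.conj_ofReal (d i))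
    (charpoly_diagonal _)

lemma neg_sum_half_mul_logb_half {ι : Type*} [Fintype ι] (μ : ι → ℝ) (hμ : ∑ i, μ i = 1) :
    -∑ p : Fin 2 × ι, μ p.2 / 2 * logb 2 (μ p.2 / 2) = -∑ i, μ i * logb 2 (μ i) + 1 := by
  have hterm : ∀ i, μ i / 2 * logb 2 (μ i / 2) = (μ i * logb 2 (μ i) - μ i) / 2 := fun i => by
    rw [← mul_logb_div_two]; ring
  rw [Fintype.sum_prod_type]
  simp only [hterm, Finset.sum_const, Finset.card_univ, Fintype.card_fin, nsmul_eq_mul,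
    ← Finset.sum_div, Finset.sum_sub_distrib, hμ]
  ring

noncomputable def qubitSpectrum (t : ℝ) : Fin 2 → ℝ := ![(1 + t) / 2, (1 - t) / 2]

lemma sum_qubitSpectrum (t : ℝ) : ∑ i, qubitSpectrum t i = 1 := by
  simp only [Fin.sum_univ_two, qubitSpectrum, cons_val_zero, cons_val_one]
  ring

lemma binEnt_one_sub_div_two_eq_sum (t : ℝ) :
    binEnt ((1 - t) / 2) = -∑ i, qubitSpectrum t i * logb 2 (qubitSpectrum t i) := by
  rw [binEnt, Fin.sum_univ_two, show 1 - (1 - t) / 2 = (1 + t) / 2 by ring]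
  simp only [qubitSpectrum, cons_val_zero, cons_val_one]
  ring

noncomputable def blochState (δz δx : ℝ) : Matrix (Fin 2) (Fin 2) ℂ :=
  ((1 : ℂ) / 2) • Matrix.of ![![(1 : ℂ) + (δz : ℂ), (δx : ℂ)], ![(δx : ℂ), (1 : ℂ) - (δz : ℂ)]]

lemma phaseFlip_mul_blochState_mul_phaseFlip (δz δx : ℝ) :
    Matrix.of ![![(1 : ℂ), 0], ![0, (-1 : ℂ)]] * blochState δz δx *
      Matrix.of ![![(1 : ℂ), 0], ![0, (-1 : ℂ)]] = blochState δz (-δx) := by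
  ext i j
  fin_cases i <;> fin_cases j <;> simp [blochState, mul_apply, Fin.sum_univ_two]

lemma half_smul_blochState_add_blochState_neg (δz δx : ℝ) :
    ((1 : ℂ) / 2) • (blochState δz δx + blochState δz (-δx)) =
      diagonal fun i => (qubitSpectrum δz i : ℂ) := by
  ext i j
  fin_cases i <;> fin_cases j <;> simp [blochState, qubitSpectrum] <;> ring

noncomputable def cqState (δz δx : ℝ) : Matrix (Fin 2 × Fin 2) (Fin 2 × Fin 2) ℂ :=
  ((1 : ℂ) / 2) • ((((1 : ℂ) / 2) • Matrix.of ![![(1 : ℂ), 1], ![1, (1 : ℂ)]]) ⊗ₖ blochState δz δx +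
    (((1 : ℂ) / 2) • Matrix.of ![![(1 : ℂ), -1], ![-1, (1 : ℂ)]]) ⊗ₖ blochState δz (-δx))

lemma reindex_cqState (δz δx : ℝ) :
    reindex finProdFinEquiv finProdFinEquiv (cqState δz δx) =
      ((1 : ℂ) / 4) • !![1 + (δz : ℂ), 0, 0, (δx : ℂ); 0, 1 - (δz : ℂ), (δx : ℂ), 0;
        0, (δx : ℂ), 1 + (δz : ℂ), 0; (δx : ℂ), 0, 0, 1 - (δz : ℂ)] := by
  ext i j
  fin_cases i <;> fin_cases j <;>
    simp [cqState, blochState, finProdFinEquiv, Fin.divNat, Fin.modNat] <;> ring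

lemma cqState_isHermitian (δz δx : ℝ) : (cqState δz δx).IsHermitian := by
  have h : (reindex finProdFinEquiv finProdFinEquiv (cqState δz δx)).IsHermitian := by
    rw [reindex_cqState]
    ext i j
    fin_cases i <;> fin_cases j <;> simp [Complex.conj_ofReal]
  simpa only [reindex_apply, submatrix_submatrix, Equiv.symm_comp_self, submatrix_id_id] using
    h.submatrix (finProdFinEquiv : Fin 2 × Fin 2 ≃ Fin 4)

lemma charpoly_cqState (δz δx : ℝ) :
    (cqState δz δx).charpoly =
      ∏ p : Fin 2 × Fin 2, (X - C ((qubitSpectrum √(δx ^ 2 + δz ^ 2) p.2 / 2 : ℝ) : ℂ)) := by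
  set r := √(δx ^ 2 + δz ^ 2)
  have hr : (r : ℂ) ^ 2 = (δx : ℂ) ^ 2 + (δz : ℂ) ^ 2 := by
    exact_mod_cast sq_sqrt (by positivity : 0 ≤ δx ^ 2 + δz ^ 2)
  rw [← charpoly_reindex finProdFinEquiv, reindex_cqState]
  refine Polynomial.funext fun x => ?_
  rw [eval_charpoly, eval_prod, Fintype.prod_prod_type]
  simp [det_succ_row_zero, Fin.sum_univ_succ, Fin.succAbove, qubitSpectrum]
  -- both sides are squares: of `(x - 1/4)^2 - (δx^2 + δz^2)/16` and of `(x - 1/4)^2 - r^2/16`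
  linear_combination
    ((2 * (x - 1 / 4) ^ 2 - ((δx : ℂ) ^ 2 + (δz : ℂ) ^ 2 + (r : ℂ) ^ 2) / 16) / 16) * hr

lemma vNEnt_cqState (δz δx : ℝ) :
    vNEnt (cqState δz δx) = binEnt ((1 - √(δx ^ 2 + δz ^ 2)) / 2) + 1 := by
  rw [vNEnt_eq_of_charpoly_eq (cqState_isHermitian δz δx) (charpoly_cqState δz δx),
    neg_sum_half_mul_logb_half _ (sum_qubitSpectrum _), binEnt_one_sub_div_two_eq_sum]

theorem stmt15 (δz δx : ℝ) (hδ : δx ^ 2 + δz ^ 2 ≤ 1)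
    (ρp ρm : Matrix (Fin 2) (Fin 2) ℂ)
    (hρp : ρp = ((1 : ℂ) / 2) •
      Matrix.of ![![(1 : ℂ) + (δz : ℂ), (δx : ℂ)], ![(δx : ℂ), (1 : ℂ) - (δz : ℂ)]])
    (Z : Matrix (Fin 2) (Fin 2) ℂ)
    (hZ : Z = Matrix.of ![![(1 : ℂ), 0], ![0, (-1 : ℂ)]])
    (hρm : ρm = Z * ρp * Z)
    (plusProj minusProj : Matrix (Fin 2) (Fin 2) ℂ)
    (hplus : plusProj = ((1 : ℂ) / 2) • Matrix.of ![![(1 : ℂ), 1], ![1, (1 : ℂ)]])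
    (hminus : minusProj = ((1 : ℂ) / 2) • Matrix.of ![![(1 : ℂ), -1], ![-1, (1 : ℂ)]])
    (ρXB : Matrix (Fin 2 × Fin 2) (Fin 2 × Fin 2) ℂ)
    (hρXB : ρXB = ((1 : ℂ) / 2) • (plusProj ⊗ₖ ρp + minusProj ⊗ₖ ρm))
    (ρB : Matrix (Fin 2) (Fin 2) ℂ) (hρB : ρB = ((1 : ℂ) / 2) • (ρp + ρm)) :
    vNEnt ρXB - vNEnt ρB =
        binEnt ((1 - Real.sqrt (δx ^ 2 + δz ^ 2)) / 2) + 1 - binEnt ((1 - δz) / 2) ∧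
      vNEnt ρXB - vNEnt ρB ≤ binEnt ((1 - δx) / 2) := by
  have hρp' : ρp = blochState δz δx := hρp
  have hρm' : ρm = blochState δz (-δx) := by
    rw [hρm, hZ, hρp', phaseFlip_mul_blochState_mul_phaseFlip]
  have hB : vNEnt ρB = binEnt ((1 - δz) / 2) := by
    rw [hρB, hρp', hρm', half_smul_blochState_add_blochState_neg, vNEnt_diagonal,
      binEnt_one_sub_div_two_eq_sum]
  have hXB : vNEnt ρXB = binEnt ((1 - √(δx ^ 2 + δz ^ 2)) / 2) + 1 := by
    rw [hρXB, hplus, hminus, hρp', hρm']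
    exact vNEnt_cqState δz δx
  rw [hXB, hB]
  exact ⟨rfl, binEnt_sqrt_add_one_sub_binEnt_le hδ⟩
end
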